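/- Suppose a sequence of vectors u(k) ∈ R^n satisfies ‖y − u(k)‖₂² ≤ (1 − η λ/2)^k ‖y − u(0)‖₂², and weight vectors satisfy ‖w_r(k+1) − w_r(k)‖₂ ≤ (η √n / √m) ‖y − u(k)‖₂ for all k. Then for all k, ‖w_r(k) − w_r(0)‖₂ ≤ 4√n ‖y − u(0)‖₂ / (√m λ), provided 0 < ηλ/2 < 1. -/
import Mathlib


/-- If `‖y − u(k)‖² ≤ (1 − ηλ/2)^k ‖y − u(0)‖²` and
`‖w(k+1) − w(k)‖ ≤ (η√n/√m) ‖y − u(k)‖`, then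
`‖w(k) − w(0)‖ ≤ 4√n ‖y − u(0)‖ / (√m λ)`. -/
theorem weight_movement_bound (n d : ℕ) (η lam m : ℝ)
    (hη : 0 < η) (hlam : 0 < lam) (hm : 0 < m)
    (hstep : 0 < η * lam / 2) (hstep1 : η * lam / 2 < 1)
    (y : EuclideanSpace ℝ (Fin n)) (u : ℕ → EuclideanSpace ℝ (Fin n))
    (w : ℕ → EuclideanSpace ℝ (Fin d))
    (hconv : ∀ k : ℕ, ‖y - u k‖ ^ 2 ≤ (1 - η * lam / 2) ^ k * ‖y - u 0‖ ^ 2)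
    (hmove : ∀ k : ℕ,
      ‖w (k + 1) - w k‖ ≤ η * Real.sqrt n / Real.sqrt m * ‖y - u k‖) :
    ∀ k : ℕ, ‖w k - w 0‖ ≤ 4 * Real.sqrt n * ‖y - u 0‖ / (Real.sqrt m * lam) := by
  set q : ℝ := η * lam / 2 with hq
  set r : ℝ := Real.sqrt (1 - q) with hr
  have hq0 : 0 < q := hstep
  have h1q : 0 ≤ 1 - q := by linarith
  have hr0 : 0 ≤ r := Real.sqrt_nonneg _
  have hr_le : r ≤ 1 - q / 2 := by
    have h : (1 - q : ℝ) ≤ (1 - q / 2) ^ 2 := by nlinarith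
    calc r ≤ Real.sqrt ((1 - q / 2) ^ 2) := Real.sqrt_le_sqrt h
      _ = 1 - q / 2 := Real.sqrt_sq (by linarith)
  have h1r : 0 < 1 - r := by linarith
  have hr1 : r < 1 := by linarith
  have hC0 : 0 ≤ η * Real.sqrt n / Real.sqrt m := by positivity
  set C : ℝ := η * Real.sqrt n / Real.sqrt m * ‖y - u 0‖ with hC
  have hCnn : 0 ≤ C := mul_nonneg hC0 (norm_nonneg _)
  have hdecay : ∀ k : ℕ, ‖y - u k‖ ≤ r ^ k * ‖y - u 0‖ := by
    intro k
    have h2 : ‖y - u k‖ ^ 2 ≤ (r ^ k * ‖y - u 0‖) ^ 2 := by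
      have he2 : (r ^ k * ‖y - u 0‖) ^ 2 = (1 - q) ^ k * ‖y - u 0‖ ^ 2 := by
        rw [mul_pow, ← pow_mul, mul_comm k 2, pow_mul, hr, Real.sq_sqrt h1q]
      rw [he2]; exact hconv k
    have h3 := Real.sqrt_le_sqrt h2
    rwa [Real.sqrt_sq (norm_nonneg _), Real.sqrt_sq (by positivity)] at h3
  have hstepk : ∀ k : ℕ, ‖w (k + 1) - w k‖ ≤ C * r ^ k := by
    intro k
    calc ‖w (k + 1) - w k‖ ≤ η * Real.sqrt n / Real.sqrt m * ‖y - u k‖ := hmove k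
      _ ≤ η * Real.sqrt n / Real.sqrt m * (r ^ k * ‖y - u 0‖) :=
        mul_le_mul_of_nonneg_left (hdecay k) hC0
      _ = C * r ^ k := by ring
  have htel : ∀ k : ℕ, ‖w k - w 0‖ ≤ C * ∑ j ∈ Finset.range k, r ^ j := by
    intro k
    induction k with
    | zero => simp
    | succ k ih =>
      calc ‖w (k + 1) - w 0‖ ≤ ‖w (k + 1) - w k‖ + ‖w k - w 0‖ := by
            have := norm_sub_le_norm_sub_add_norm_sub (w (k + 1)) (w k) (w 0)
            simpa using this
        _ ≤ C * r ^ k + C * ∑ j ∈ Finset.range k, r ^ j :=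
            add_le_add (hstepk k) ih
        _ = C * ∑ j ∈ Finset.range (k + 1), r ^ j := by
            rw [Finset.sum_range_succ]; ring
  intro k
  have hgeom : ∑ j ∈ Finset.range k, r ^ j ≤ 2 / q := by
    have hpk : (0:ℝ) ≤ r ^ k := pow_nonneg hr0 k
    calc ∑ j ∈ Finset.range k, r ^ j = (r ^ k - 1) / (r - 1) := geom_sum_eq hr1.ne k
      _ = (1 - r ^ k) / (1 - r) := by
          rw [← neg_sub 1 r, ← neg_sub 1 (r ^ k), neg_div_neg_eq]
      _ ≤ 1 / (1 - r) := div_le_div₀ (by norm_num) (by linarith) h1r le_rfl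
      _ ≤ 2 / q := by rw [div_le_div_iff₀ h1r hq0]; nlinarith
  calc ‖w k - w 0‖ ≤ C * ∑ j ∈ Finset.range k, r ^ j := htel k
    _ ≤ C * (2 / q) := mul_le_mul_of_nonneg_left hgeom hCnn
    _ = 4 * Real.sqrt n * ‖y - u 0‖ / (Real.sqrt m * lam) := by
        rw [hC, hq]
        field_simp
        ring
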